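/- Let R be a commutative ring, A an R-algebra, and F a nonempty set of two-sided ideals of A that is downward directed (for I, J ∈ F there is K ∈ F with K ⊆ I ∩ J), consists of R-cofinite ideals, and is cofinitary: every I ∈ F contains some J ∈ F such that A/J is finitely generated and projective as an R-module. Let A°_F = {f ∈ A^* : f(I) = 0 for some I ∈ F}. Then the R-pairing (A, A°_F) with ⟨a,f⟩ = f(a) satisfies the α-condition: for every R-module M the map M ⊗_R A°_F → Hom_R(A,M), m ⊗ f ↦ (a ↦ f(a)m), is injective. -/
import Mathlib

open TensorProduct

section aux
variable (R : Type*) [CommRing R] {P Q N : Type*}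
  [AddCommGroup P] [Module R P] [AddCommGroup Q] [Module R Q]
  [AddCommGroup N] [Module R N]

lemma dualTensorHom_naturality (φ : P →ₗ[R] Q) (x : Module.Dual R Q ⊗[R] N) :
    dualTensorHom R P N (TensorProduct.map φ.dualMap LinearMap.id x) =
      (dualTensorHom R Q N x).comp φ := by
  induction x using TensorProduct.induction_on with
  | zero => simp
  | tmul g n => ext p; simp
  | add a b ha hb => simp only [map_add, ha, hb, LinearMap.add_comp]

lemma dualTensorHom_injective_of_free [Module.Finite R Q] [Module.Free R Q] :
    Function.Injective (dualTensorHom R Q N) := by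
  intro x y h
  apply (dualTensorHomEquiv R Q N).injective
  simpa [dualTensorHomEquiv, dualTensorHomEquivOfBasis_apply] using h

lemma dualTensorHom_injective_of_projective [Module.Finite R Q] [Module.Projective R Q] :
    Function.Injective (dualTensorHom R Q N) := by
  obtain ⟨n, p, hp⟩ := Module.Finite.exists_fin' R Q
  obtain ⟨i, hi⟩ := p.exists_rightInverse_of_surjective (LinearMap.range_eq_top.2 hp)
  suffices key : ∀ x, dualTensorHom R Q N x = 0 → x = 0 by
    intro x y h
    rw [← sub_eq_zero]
    exact key _ (by rw [map_sub, h, sub_self])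
  intro x hx
  have h1 : TensorProduct.map p.dualMap LinearMap.id x = 0 := by
    apply dualTensorHom_injective_of_free R (Q := Fin n → R)
    rw [dualTensorHom_naturality, hx, map_zero, LinearMap.zero_comp]
  have h2 : (i.dualMap ∘ₗ p.dualMap : Module.Dual R Q →ₗ[R] Module.Dual R Q)
      = LinearMap.id := by
    rw [LinearMap.dualMap_comp_dualMap, hi, LinearMap.dualMap_id]
  have h3 : x = TensorProduct.map i.dualMap LinearMap.id
      (TensorProduct.map p.dualMap LinearMap.id x) := by
    rw [← LinearMap.comp_apply, ← TensorProduct.map_comp, h2, LinearMap.id_comp,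
      TensorProduct.map_id, LinearMap.id_apply]
  rw [h3, h1, map_zero]

end aux

/-- For a pairing `β : V × W → R` and an `R`-module `M`, the canonical map
`α_M : M ⊗ W → Hom_R(V,M)`, `m ⊗ w ↦ (v ↦ ⟨v,w⟩ • m)`. -/
noncomputable def pairingAlpha (R : Type*) {V W : Type*} (M : Type*) [CommRing R]
    [AddCommGroup V] [Module R V] [AddCommGroup W] [Module R W]
    [AddCommGroup M] [Module R M] (β : V →ₗ[R] W →ₗ[R] R) :
    M ⊗[R] W →ₗ[R] (V →ₗ[R] M) :=
  (dualTensorHom R V M) ∘ₗ (TensorProduct.comm R M (Module.Dual R V)).toLinearMap ∘ₗ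
    (TensorProduct.map LinearMap.id β.flip)

theorem cofinitary_filter_alphaCondition
    {R A : Type*} [CommRing R] [Nontrivial R] [Ring A] [Algebra R A]
    -- `F` is a nonempty, downward directed set of `R`-cofinite two-sided ideals of `A`
    (F : Set (Ideal A)) (hne : F.Nonempty)
    (hdir : ∀ I ∈ F, ∀ J ∈ F, ∃ K ∈ F, K ≤ I ⊓ J)
    (htwo : ∀ I ∈ F, ∀ x ∈ I, ∀ a : A, x * a ∈ I)
    (hcof : ∀ I ∈ F, Module.Finite R (A ⧸ I))
    -- `F` is cofinitary: every `I ∈ F` contains some `J ∈ F` with `A/J` finitely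
    -- generated and projective as an `R`-module
    (hcofinitary : ∀ I ∈ F, ∃ J ∈ F, J ≤ I ∧
      Module.Finite R (A ⧸ J) ∧ Module.Projective R (A ⧸ J))
    -- `C` is the `R`-submodule `A°_F = {f ∈ A^* : f(I) = 0` for some `I ∈ F}` of `A^*`
    (C : Submodule R (Module.Dual R A))
    (hC : (C : Set (Module.Dual R A)) =
      {f : Module.Dual R A | ∃ I ∈ F, ∀ x ∈ I, f x = 0}) :
    -- then the pairing `(A, A°_F)` satisfies the `α`-condition
    ∀ (M : Type*) [AddCommGroup M] [Module R M],
      Function.Injective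
        (pairingAlpha (V := A) (W := ↥C) R M
          (LinearMap.flip (Submodule.subtype C))) := by
  classical
  intro M _ _
  letI : AddCommGroup (M ⊗[R] ↥C) := TensorProduct.addCommGroup (R := R) (M := M) (N := ↥C)
  suffices key : ∀ t, pairingAlpha (V := A) (W := ↥C) R M C.subtype.flip t = 0 → t = 0 by
    intro x y h
    rw [← sub_eq_zero]
    exact key _ (by rw [map_sub, h, sub_self])
  intro t ht
  obtain ⟨S, hS⟩ := TensorProduct.exists_finset t
  -- find a common ideal `K ∈ F` on which all the functionals occurring in `t` vanish
  have key2 : ∀ T : Finset (M × ↥C), ∃ K ∈ F, ∀ p ∈ T, ∀ x ∈ K,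
      ((p.2 : Module.Dual R A)) x = 0 := by
    intro T
    induction T using Finset.induction_on with
    | empty => exact ⟨hne.choose, hne.choose_spec, by simp⟩
    | @insert p T hps ih =>
      obtain ⟨K, hKF, hKv⟩ := ih
      have hmem : (↑p.2 : Module.Dual R A) ∈ (C : Set _) := p.2.2
      rw [hC] at hmem
      obtain ⟨I, hIF, hIv⟩ := hmem
      obtain ⟨K', hK'F, hK'le⟩ := hdir I hIF K hKF
      refine ⟨K', hK'F, fun q hq x hx => ?_⟩
      rcases Finset.mem_insert.1 hq with rfl | hq
      · exact hIv x (hK'le hx).1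
      · exact hKv q hq x (hK'le hx).2
  obtain ⟨K, hKF, hKv⟩ := key2 S
  obtain ⟨J, hJF, hJle, hfin, hproj⟩ := hcofinitary K hKF
  haveI := hfin
  haveI := hproj
  have hvan : ∀ p : {x // x ∈ S}, ∀ x ∈ J, (↑(p.1.2) : Module.Dual R A) x = 0 :=
    fun p x hx => hKv p.1 p.2 x (hJle hx)
  -- the canonical projection `π : A → A ⧸ J` as an `R`-linear map, kept opaque
  obtain ⟨π, hπ, hπzero, hπker⟩ :
      ∃ π : A →ₗ[R] A ⧸ J, Function.Surjective π ∧ (∀ x ∈ J, π x = 0) ∧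
        ∀ f : Module.Dual R A, (∀ x ∈ J, f x = 0) →
          ∃ gq : Module.Dual R (A ⧸ J), π.dualMap gq = f := by
    refine ⟨(Submodule.Quotient.restrictScalarsEquiv R J).toLinearMap ∘ₗ
      (J.restrictScalars R).mkQ, ?_, ?_, ?_⟩
    · simp only [LinearMap.coe_comp, LinearEquiv.coe_coe]
      exact (Submodule.Quotient.restrictScalarsEquiv R J).surjective.comp
        (Submodule.mkQ_surjective _)
    · intro x hx
      have h0 : (J.restrictScalars R).mkQ x = 0 := by
        rw [Submodule.mkQ_apply, Submodule.Quotient.mk_eq_zero]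
        exact hx
      simp only [LinearMap.comp_apply, h0, map_zero]
    · intro f hf
      have hle : J.restrictScalars R ≤ LinearMap.ker f := fun x hx =>
        LinearMap.mem_ker.2 (hf x hx)
      refine ⟨(Submodule.liftQ (J.restrictScalars R) f hle) ∘ₗ
        (Submodule.Quotient.restrictScalarsEquiv R J).symm.toLinearMap, ?_⟩
      ext a
      simp [LinearMap.dualMap_apply]
  -- every functional occurring in `t` factors through `A ⧸ J`
  have hlift : ∀ p : {x // x ∈ S},
      ∃ gq : Module.Dual R (A ⧸ J), π.dualMap gq = (↑(p.1.2) : Module.Dual R A) :=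
    fun p => hπker _ (fun x hx => hvan p x hx)
  choose g hg using hlift
  -- the element `y` of `(A ⧸ J)^* ⊗ M` lifting (the swap of) `t`
  let y : Module.Dual R (A ⧸ J) ⊗[R] M := ∑ p ∈ S.attach, g p ⊗ₜ[R] p.1.1
  let x : Module.Dual R A ⊗[R] M :=
    (TensorProduct.comm R M (Module.Dual R A)) (TensorProduct.map LinearMap.id C.subtype t)
  have hx0 : dualTensorHom R A M x = 0 := by
    simpa [pairingAlpha, x, LinearMap.flip_flip] using ht
  have hx : x = ∑ p ∈ S.attach, (↑(p.1.2) : Module.Dual R A) ⊗ₜ[R] p.1.1 := by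
    simp only [x, hS, map_sum, TensorProduct.map_tmul, LinearMap.id_coe, id_eq,
      TensorProduct.comm_tmul, Submodule.coe_subtype]
    exact (Finset.sum_attach S fun p => (↑p.2 : Module.Dual R A) ⊗ₜ[R] p.1).symm
  have hyx : TensorProduct.map π.dualMap LinearMap.id y = x := by
    rw [hx]
    simp only [y, map_sum, TensorProduct.map_tmul, LinearMap.id_coe, id_eq]
    exact Finset.sum_congr rfl fun p _ => by rw [hg p]
  -- conclude `y = 0` by projectivity
  have h0 : (dualTensorHom R (A ⧸ J) M y).comp π = 0 := by
    have hnat := dualTensorHom_naturality R π y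
    rw [hyx, hx0] at hnat
    exact hnat.symm
  have h0' : dualTensorHom R (A ⧸ J) M y = 0 := by
    refine LinearMap.ext fun q => ?_
    obtain ⟨a, rfl⟩ := hπ q
    simpa using LinearMap.congr_fun h0 a
  have hy0 : y = 0 := dualTensorHom_injective_of_projective R
    (show dualTensorHom R (A ⧸ J) M y = dualTensorHom R (A ⧸ J) M 0 by
      rw [h0', map_zero])
  -- transport back to `M ⊗ C`
  have hmemC : ∀ gq : Module.Dual R (A ⧸ J), π.dualMap gq ∈ C := by
    intro gq
    rw [← SetLike.mem_coe, hC]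
    refine ⟨J, hJF, fun x hx => ?_⟩
    simp [LinearMap.dualMap_apply, hπzero x hx]
  let L : Module.Dual R (A ⧸ J) →ₗ[R] ↥C := LinearMap.codRestrict C π.dualMap hmemC
  let cM : ↥C ⊗[R] M →ₗ[R] M ⊗[R] ↥C := (TensorProduct.comm R ↥C M).toLinearMap
  have e1 : TensorProduct.map L LinearMap.id y
      = ∑ p ∈ S.attach, (p.1.2 : ↥C) ⊗ₜ[R] p.1.1 := by
    rw [show y = ∑ p ∈ S.attach, g p ⊗ₜ[R] p.1.1 from rfl, map_sum]
    refine Finset.sum_congr rfl fun p _ => ?_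
    rw [TensorProduct.map_tmul]
    congr 1
    exact Subtype.ext (hg p)
  have e2 : cM (TensorProduct.map L LinearMap.id y) = t := by
    rw [e1, map_sum, hS, ← Finset.sum_attach S fun p => p.1 ⊗ₜ[R] p.2]
    exact Finset.sum_congr rfl fun p _ => TensorProduct.comm_tmul R ↥C M p.1.2 p.1.1
  rw [← e2, hy0, (TensorProduct.map L LinearMap.id).map_zero, cM.map_zero]
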